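/- arXiv:2211.02974 — 2 statements merged into one kernel-verified Lean document; each statement's English description precedes it below -/
import Mathlib

section
/- Let (B,S) be an S5-subordination algebra. The frame of round ideals RI(B) is compact and regular: the top element B is a compact element, and every round ideal J is the join of the round ideals I well-inside J. -/
open Set

/-- Image of a set under a relation: `S[X] = {b | ∃ x ∈ X, x S b}`. -/
def relImg {B₁ B₂ : Type*} (S : B₁ → B₂ → Prop) (X : Set B₁) : Set B₂ :=
  {b | ∃ x ∈ X, S x b}

/-- Preimage of a set under a relation: `S⁻¹[X] = {a | ∃ x ∈ X, a S x}`. -/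
def relPre {B₁ B₂ : Type*} (S : B₁ → B₂ → Prop) (X : Set B₂) : Set B₁ :=
  {a | ∃ x ∈ X, S a x}

/-- Relation composition: `a (T₂ ∘ T₁) c` iff `∃ b, a T₁ b ∧ b T₂ c`. -/
def relComp {B₁ B₂ B₃ : Type*} (T₂ : B₂ → B₃ → Prop) (T₁ : B₁ → B₂ → Prop) :
    B₁ → B₃ → Prop :=
  fun a c => ∃ b, T₁ a b ∧ T₂ b c

/-- Pointwise complement of a set: `¬X = {¬x | x ∈ X}`. -/
def complSet {B : Type*} [BooleanAlgebra B] (X : Set B) : Set B := (·ᶜ) '' X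

/-- A subordination between boolean algebras (axioms S1–S4). -/
structure IsSubord {B₁ B₂ : Type*} [BooleanAlgebra B₁] [BooleanAlgebra B₂]
    (T : B₁ → B₂ → Prop) : Prop where
  rel_bot : T ⊥ ⊥
  rel_top : T ⊤ ⊤
  sup_left : ∀ a b c, T a c → T b c → T (a ⊔ b) c
  inf_right : ∀ a c d, T a c → T a d → T a (c ⊓ d)
  mono : ∀ a b c d, a ≤ b → T b c → c ≤ d → T a d

/-- An S5-subordination on a boolean algebra (axioms S1–S7). -/
structure IsS5Sub {B : Type*} [BooleanAlgebra B] (S : B → B → Prop)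
    extends IsSubord S : Prop where
  le_of_rel : ∀ a b, S a b → a ≤ b
  compl_rel : ∀ a b, S a b → S bᶜ aᶜ
  dense : ∀ a b, S a b → ∃ c, S a c ∧ S c b

/-- A compatible subordination between S5-subordination algebras. -/
def IsCompat {B₁ B₂ : Type*} [BooleanAlgebra B₁] [BooleanAlgebra B₂]
    (S₁ : B₁ → B₁ → Prop) (S₂ : B₂ → B₂ → Prop) (T : B₁ → B₂ → Prop) : Prop :=
  IsSubord T ∧ relComp S₂ T = T ∧ relComp T S₁ = T

/-- Ideal of a boolean algebra (as a set). -/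
def IsIdeal {B : Type*} [BooleanAlgebra B] (I : Set B) : Prop :=
  ⊥ ∈ I ∧ (∀ a b : B, a ≤ b → b ∈ I → a ∈ I) ∧ (∀ a b : B, a ∈ I → b ∈ I → a ⊔ b ∈ I)

/-- Round ideal: an ideal with `I = S⁻¹[I]`. -/
def IsRoundIdeal {B : Type*} [BooleanAlgebra B] (S : B → B → Prop) (I : Set B) : Prop :=
  IsIdeal I ∧ relPre S I = I

/-- The ideal generated by a set: intersection of all ideals containing it. -/
def idealGen {B : Type*} [BooleanAlgebra B] (X : Set B) : Set B :=
  ⋂₀ {J | IsIdeal J ∧ X ⊆ J}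

/-- The pseudocomplement of a round ideal: `I* = ¬S[U(I)]`. -/
def pstar {B : Type*} [BooleanAlgebra B] (S : B → B → Prop) (I : Set B) : Set B :=
  complSet (relImg S (upperBounds I))

/-- The well-inside relation on round ideals: `I ≺ J` iff `U(I) ∩ J ≠ ∅`. -/
def precR {B : Type*} [BooleanAlgebra B] (I J : Set B) : Prop :=
  (upperBounds I ∩ J).Nonempty

/-- Normal round ideal: a round ideal with `I = I**`. -/
def IsNormalRoundIdeal {B : Type*} [BooleanAlgebra B] (S : B → B → Prop) (I : Set B) : Prop :=
  IsRoundIdeal S I ∧ pstar S (pstar S I) = I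

/-- The dual of a subordination: `b T̃ a` iff `¬a T ¬b`. -/
def relDual {B₁ B₂ : Type*} [BooleanAlgebra B₁] [BooleanAlgebra B₂]
    (T : B₁ → B₂ → Prop) : B₂ → B₁ → Prop :=
  fun b a => T aᶜ bᶜ

/-- Continuity of a compatible subordination. -/
def IsContinuousSub {B₁ B₂ : Type*} [BooleanAlgebra B₁] [BooleanAlgebra B₂]
    (S₁ : B₁ → B₁ → Prop) (S₂ : B₂ → B₂ → Prop) (T : B₁ → B₂ → Prop) : Prop :=
  ∀ b₁ b₂, S₂ b₁ b₂ → ∃ a, relDual T b₁ a ∧ ∀ a', relDual T b₂ a' → S₁ a a'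

/-- Functional subordination: `T̃ ∘ T ⊆ S₁` and `S₂ ⊆ T ∘ T̃`. -/
def IsFunctionalSub {B₁ B₂ : Type*} [BooleanAlgebra B₁] [BooleanAlgebra B₂]
    (S₁ : B₁ → B₁ → Prop) (S₂ : B₂ → B₂ → Prop) (T : B₁ → B₂ → Prop) : Prop :=
  (∀ a a', relComp (relDual T) T a a' → S₁ a a') ∧
  (∀ b b', S₂ b b' → relComp T (relDual T) b b')

/-
Compactness is a finiteness property of ideal generation: `⊤` lies in the ideal generated by
`⋃₀ 𝒮` exactly when it lies below a finite join of elements of `⋃₀ 𝒮`, and finitely many members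
of `𝒮` already contain those elements. For regularity, roundness writes each `b ∈ J` as `b S c`
with `c ∈ J`; by density `{x | x S c}` is a round ideal, it contains `b`, and `c` is an upper bound
of it lying in `J`, so it is well inside `J`.
-/

theorem Set.Finite.exists_finite_subset_sUnion {α : Type*} {s : Set α} {𝒮 : Set (Set α)}
    (hs : s.Finite) (h : s ⊆ ⋃₀ 𝒮) : ∃ 𝒯 ⊆ 𝒮, 𝒯.Finite ∧ s ⊆ ⋃₀ 𝒯 := by
  rw [sUnion_eq_iUnion] at h
  obtain ⟨I, hI, hsI⟩ := Set.finite_subset_iUnion hs h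
  refine ⟨Subtype.val '' I, by simp, hI.image _, ?_⟩
  rwa [sUnion_image]

section Ideals

variable {B : Type*} [BooleanAlgebra B]

theorem IsIdeal.mem_of_le {J : Set B} (hJ : IsIdeal J) {a b : B} (hab : a ≤ b) (hb : b ∈ J) :
    a ∈ J :=
  hJ.2.1 a b hab hb

theorem IsIdeal.finset_sup_mem {J : Set B} (hJ : IsIdeal J) {F : Finset B} (hF : ↑F ⊆ J) :
    F.sup id ∈ J := by
  classical
  induction F using Finset.induction_on with
  | empty => exact hJ.1
  | insert a F _ ih =>
    rw [Finset.coe_insert, insert_subset_iff] at hF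
    rw [Finset.sup_insert]
    exact hJ.2.2 _ _ hF.1 (ih hF.2)

theorem subset_idealGen {X : Set B} : X ⊆ idealGen X :=
  fun _ ha _ hJ => hJ.2 ha

theorem idealGen_subset {X J : Set B} (hJ : IsIdeal J) (hXJ : X ⊆ J) : idealGen X ⊆ J :=
  fun _ ha => ha J ⟨hJ, hXJ⟩

theorem isIdeal_setOf_le_finset_sup (X : Set B) :
    IsIdeal {b : B | ∃ F : Finset B, ↑F ⊆ X ∧ b ≤ F.sup id} := by
  classical
  refine ⟨⟨∅, by simp, bot_le⟩, fun a b hab ⟨F, hF, hb⟩ => ⟨F, hF, hab.trans hb⟩, ?_⟩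
  rintro a b ⟨F, hF, ha⟩ ⟨G, hG, hb⟩
  refine ⟨F ∪ G, by simpa using union_subset hF hG, ?_⟩
  rw [Finset.sup_union]
  exact sup_le_sup ha hb

theorem mem_idealGen_iff {X : Set B} {b : B} :
    b ∈ idealGen X ↔ ∃ F : Finset B, ↑F ⊆ X ∧ b ≤ F.sup id := by
  classical
  constructor
  · intro hb
    refine idealGen_subset (isIdeal_setOf_le_finset_sup X) (fun a ha => ?_) hb
    exact ⟨{a}, by simpa using ha, by simp⟩
  · rintro ⟨F, hF, hb⟩ J ⟨hJ, hXJ⟩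
    exact hJ.mem_of_le hb (hJ.finset_sup_mem (hF.trans hXJ))

theorem idealGen_eq_univ_iff {X : Set B} :
    idealGen X = univ ↔ ∃ F : Finset B, ↑F ⊆ X ∧ F.sup id = ⊤ := by
  simp only [eq_univ_iff_forall, mem_idealGen_iff]
  refine ⟨fun h => h ⊤ |>.imp fun F hF => ⟨hF.1, top_le_iff.mp hF.2⟩, ?_⟩
  rintro ⟨F, hF, htop⟩ b
  exact ⟨F, hF, htop ▸ le_top⟩

theorem exists_finite_subset_idealGen_sUnion_eq_univ {𝒮 : Set (Set B)}
    (h : idealGen (⋃₀ 𝒮) = univ) : ∃ 𝒯 ⊆ 𝒮, 𝒯.Finite ∧ idealGen (⋃₀ 𝒯) = univ := by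
  obtain ⟨F, hF, htop⟩ := idealGen_eq_univ_iff.mp h
  obtain ⟨𝒯, h𝒯, hfin, hF𝒯⟩ := F.finite_toSet.exists_finite_subset_sUnion hF
  exact ⟨𝒯, h𝒯, hfin, idealGen_eq_univ_iff.mpr ⟨F, hF𝒯, htop⟩⟩

theorem subset_of_precR {I J : Set B} (hJ : IsIdeal J) (h : precR I J) : I ⊆ J := by
  obtain ⟨c, hc, hcJ⟩ := h
  exact fun a ha => hJ.mem_of_le (hc ha) hcJ

end Ideals

namespace IsS5Sub

variable {B : Type*} [BooleanAlgebra B] {S : B → B → Prop}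

theorem isIdeal_setOf_rel (hS : IsS5Sub S) (c : B) : IsIdeal {x | S x c} :=
  ⟨hS.mono ⊥ ⊥ ⊥ c le_rfl hS.rel_bot bot_le, fun x y hxy hy => hS.mono x y c c hxy hy le_rfl,
    fun x y hx hy => hS.sup_left x y c hx hy⟩

theorem isRoundIdeal_setOf_rel (hS : IsS5Sub S) (c : B) : IsRoundIdeal S {x | S x c} := by
  refine ⟨hS.isIdeal_setOf_rel c, Subset.antisymm ?_ fun x hx => ?_⟩
  · rintro x ⟨y, hyc, hxy⟩
    exact (hS.isIdeal_setOf_rel c).mem_of_le (hS.le_of_rel x y hxy) hyc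
  · obtain ⟨d, hxd, hdc⟩ := hS.dense x c hx
    exact ⟨d, hdc, hxd⟩

theorem precR_setOf_rel (hS : IsS5Sub S) {c : B} {J : Set B} (hc : c ∈ J) :
    precR {x | S x c} J :=
  ⟨c, fun x hx => hS.le_of_rel x c hx, hc⟩

theorem eq_idealGen_sUnion_precR (hS : IsS5Sub S) {J : Set B} (hJ : IsRoundIdeal S J) :
    J = idealGen (⋃₀ {I : Set B | IsRoundIdeal S I ∧ precR I J}) := by
  refine Subset.antisymm (fun b hb => ?_) ?_
  · rw [← hJ.2] at hb
    obtain ⟨c, hcJ, hbc⟩ := hb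
    exact subset_idealGen ⟨_, ⟨hS.isRoundIdeal_setOf_rel c, hS.precR_setOf_rel hcJ⟩, hbc⟩
  · exact idealGen_subset hJ.1 (sUnion_subset fun I hI => subset_of_precR hJ.1 hI.2)

end IsS5Sub

/-- the frame of round ideals is compact (the top is a compact
element) and regular (every round ideal is the join of the round ideals
well inside it). -/
theorem stmt5 {B : Type*} [BooleanAlgebra B] (S : B → B → Prop) (hS : IsS5Sub S) :
    (∀ 𝒮 : Set (Set B), (∀ I ∈ 𝒮, IsRoundIdeal S I) →
      idealGen (⋃₀ 𝒮) = Set.univ →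
      ∃ 𝒯 ⊆ 𝒮, 𝒯.Finite ∧ idealGen (⋃₀ 𝒯) = Set.univ) ∧
    (∀ J : Set B, IsRoundIdeal S J →
      J = idealGen (⋃₀ {I : Set B | IsRoundIdeal S I ∧ precR I J})) :=
  ⟨fun _ _ h => exists_finite_subset_idealGen_sUnion_eq_univ h,
    fun _ hJ => hS.eq_idealGen_sUnion_precR hJ⟩
end

section
/- Let L₁, L₂ be compact regular frames and □ : L₁ → L₂ a frame homomorphism. Then the compatible subordination B(□) : BL₂ → BL₁ defined by b B(□) a iff b ≺ □a is functional: its dual satisfies B(□)~ ∘ B(□) ⊆ ≺ (on BL₂) and ≺ (on BL₁) ⊆ B(□) ∘ B(□)~. -/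
open Set

/-- Compact element of a complete lattice, with its definition as in Mathlib of December 2024. -/
def CompleteLattice.IsCompactElement {α : Type*} [CompleteLattice α] (k : α) :=
  ∀ s : Set α, k ≤ sSup s → ∃ t : Finset α, ↑t ⊆ s ∧ k ≤ t.sup id

/-- Pseudocomplement in a frame. -/
def pc {L : Type*} [Order.Frame L] (a : L) : L := sSup {x | a ⊓ x = ⊥}

/-- The well-inside relation in a frame: `a ≺ b` iff `a* ⊔ b = ⊤`. -/
def wI {L : Type*} [Order.Frame L] (a b : L) : Prop := pc a ⊔ b = ⊤

/-- The booleanization of a frame: the set of its regular elements `a = a**`. -/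
def Bool' (L : Type*) [Order.Frame L] : Set L := {a | pc (pc a) = a}

/-- A frame is regular if every element is the join of the elements well inside it. -/
def IsRegularFrame (L : Type*) [Order.Frame L] : Prop :=
  ∀ a : L, a = sSup {x | wI x a}

/-- A preframe homomorphism preserves finite meets and directed joins. -/
def IsPreframeHom {L M : Type*} [Order.Frame L] [Order.Frame M] (f : L → M) : Prop :=
  f ⊤ = ⊤ ∧ (∀ a b : L, f (a ⊓ b) = f a ⊓ f b) ∧
    ∀ s : Set L, s.Nonempty → DirectedOn (· ≤ ·) s → f (sSup s) = sSup (f '' s)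

/-- A frame homomorphism preserves arbitrary joins and finite meets. -/
def IsFrameHom {L M : Type*} [Order.Frame L] [Order.Frame M] (f : L → M) : Prop :=
  f ⊤ = ⊤ ∧ (∀ a b : L, f (a ⊓ b) = f a ⊓ f b) ∧
    ∀ s : Set L, f (sSup s) = sSup (f '' s)

/-!
Part one is a lattice computation: from `b* ⊔ □a = ⊤`, `b' ⊔ □a* = ⊤` and `□a ⊓ □a* = ⊥`
distributivity gives `b* ⊔ b' = ⊤`. For part two, compactness of `⊤` and regularity interpolate
`a ≺ a'` by some `c ≺ a'` with `a* ⊔ c = ⊤`, and `b := (□c)**` is the required witness.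
-/

theorem codisjoint_of_codisjoint_of_disjoint {α : Type*} [DistribLattice α] [BoundedOrder α]
    {p q x y : α} (hp : Codisjoint p x) (hq : Codisjoint q y) (hxy : Disjoint x y) :
    Codisjoint p q := by
  rw [codisjoint_iff] at hp hq ⊢
  apply top_unique
  calc ⊤ = (p ⊔ x) ⊓ (q ⊔ y) := by rw [hp, hq, inf_idem]
    _ ≤ (p ⊔ q ⊔ x) ⊓ (p ⊔ q ⊔ y) :=
        inf_le_inf (sup_le_sup_right le_sup_left x) (sup_le_sup_right le_sup_right y)
    _ = p ⊔ q := by rw [← sup_inf_left, hxy.eq_bot, sup_bot_eq]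

theorem CompleteLattice.IsCompactElement.exists_le_of_directedOn {α : Type*} [CompleteLattice α]
    {k : α} (hk : CompleteLattice.IsCompactElement k) {s : Set α} (hne : s.Nonempty)
    (hdir : DirectedOn (· ≤ ·) s) (hle : k ≤ sSup s) : ∃ x ∈ s, k ≤ x :=
  (isCompactElement_iff_le_of_directed_sSup_le α k).1
    ((isCompactElement_iff_exists_le_sSup_of_le_sSup α k).2 hk) s hne hdir hle

section Frame

variable {L : Type*} [Order.Frame L]

theorem pc_eq_compl (a : L) : pc a = aᶜ :=
  le_antisymm (sSup_le fun _ hx => le_compl_iff_disjoint_left.2 (disjoint_iff.2 hx))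
    (le_sSup inf_compl_eq_bot)

theorem wI_iff_codisjoint {a b : L} : wI a b ↔ Codisjoint aᶜ b := by
  rw [wI, pc_eq_compl, codisjoint_iff]

theorem mem_Bool'_iff {a : L} : a ∈ Bool' L ↔ Heyting.IsRegular a := by
  change pc (pc a) = a ↔ aᶜᶜ = a
  rw [pc_eq_compl, pc_eq_compl]

theorem wI_bot_left (a : L) : wI ⊥ a :=
  wI_iff_codisjoint.2 (compl_bot (α := L) ▸ codisjoint_top_left)

theorem wI.sup_left {a b c : L} (ha : wI a c) (hb : wI b c) : wI (a ⊔ b) c := by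
  rw [wI_iff_codisjoint, compl_sup] at *
  exact ha.inf_left hb

theorem directedOn_wI_left (a : L) : DirectedOn (· ≤ ·) {x | wI x a} :=
  fun x hx y hy => ⟨x ⊔ y, hx.sup_left hy, le_sup_left, le_sup_right⟩

theorem exists_wI_codisjoint_of_codisjoint (hc : CompleteLattice.IsCompactElement (⊤ : L))
    (hr : IsRegularFrame L) {u a : L} (hua : Codisjoint u a) :
    ∃ c, wI c a ∧ Codisjoint u c := by
  set s := (u ⊔ ·) '' {x | wI x a}
  have hdir : DirectedOn (· ≤ ·) s :=
    (directedOn_wI_left a).mono_comp fun _ _ h => sup_le_sup_left h u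
  have hle : ⊤ ≤ sSup s := by
    rw [← hua.eq_top, hr a]
    refine sup_le (le_sSup_of_le ⟨⊥, wI_bot_left a, rfl⟩ le_sup_left) (sSup_le fun x hx => ?_)
    exact le_sSup_of_le ⟨x, hx, rfl⟩ le_sup_right
  have hne : s.Nonempty := ⟨u ⊔ ⊥, ⊥, wI_bot_left a, rfl⟩
  obtain ⟨_, ⟨c, hca, rfl⟩, htop⟩ := hc.exists_le_of_directedOn hne hdir hle
  exact ⟨c, hca, codisjoint_iff.2 (top_unique htop)⟩

end Frame

namespace IsFrameHom

variable {L M : Type*} [Order.Frame L] [Order.Frame M] {f : L → M}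

theorem map_bot (hf : IsFrameHom f) : f ⊥ = ⊥ := by
  simpa using hf.2.2 ∅

theorem map_sup (hf : IsFrameHom f) (a b : L) : f (a ⊔ b) = f a ⊔ f b := by
  simpa [image_pair] using hf.2.2 {a, b}

theorem codisjoint_map (hf : IsFrameHom f) {a b : L} (h : Codisjoint a b) :
    Codisjoint (f a) (f b) := by
  rw [codisjoint_iff, ← hf.map_sup, h.eq_top, hf.1]

theorem disjoint_map_compl (hf : IsFrameHom f) (a : L) : Disjoint (f a) (f aᶜ) := by
  rw [disjoint_iff, ← hf.2.1, inf_compl_eq_bot, hf.map_bot]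

theorem wI_map (hf : IsFrameHom f) {a b : L} (h : wI a b) : wI (f a) (f b) := by
  rw [wI_iff_codisjoint] at h ⊢
  exact (hf.codisjoint_map h).mono_left
    (le_compl_iff_disjoint_left.2 (hf.disjoint_map_compl a))

end IsFrameHom

theorem stmt19_general {L₁ L₂ : Type*} [Order.Frame L₁] [Order.Frame L₂]
    (hc₁ : CompleteLattice.IsCompactElement (⊤ : L₁)) (hr₁ : IsRegularFrame L₁)
    (box : L₁ → L₂) (hbox : IsFrameHom box) :
    (∀ b b' : L₂, b ∈ Bool' L₂ → b' ∈ Bool' L₂ →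
      (∃ a ∈ Bool' L₁, wI b (box a) ∧ wI (pc b') (box (pc a))) → wI b b') ∧
    (∀ a a' : L₁, a ∈ Bool' L₁ → a' ∈ Bool' L₁ → wI a a' →
      ∃ b ∈ Bool' L₂, wI (pc b) (box (pc a)) ∧ wI b (box a')) := by
  refine ⟨fun b b' _ hb' ⟨a, _, hba, hb'a⟩ => ?_, fun a a' _ _ haa' => ?_⟩
  · rw [wI_iff_codisjoint] at hba hb'a ⊢
    rw [pc_eq_compl, (mem_Bool'_iff.1 hb').eq, pc_eq_compl] at hb'a
    exact codisjoint_of_codisjoint_of_disjoint hba hb'a (hbox.disjoint_map_compl a)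
  · rw [wI_iff_codisjoint] at haa'
    obtain ⟨c, hca', hac⟩ := exists_wI_codisjoint_of_codisjoint hc₁ hr₁ haa'
    refine ⟨(box c)ᶜᶜ, mem_Bool'_iff.2 (Heyting.isRegular_compl _), ?_, ?_⟩
    · rw [pc_eq_compl, pc_eq_compl, wI_iff_codisjoint, compl_compl_compl]
      exact (hbox.codisjoint_map hac.symm).mono_left le_compl_compl
    · rw [wI_iff_codisjoint, compl_compl_compl, ← wI_iff_codisjoint]
      exact hbox.wI_map hca'

/-- for a frame homomorphism `□ : L₁ → L₂` between compact
regular frames, the compatible subordination `b B(□) a` iff `b ≺ □a` from the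
booleanization of `L₂` to that of `L₁` is functional:
`B(□)~ ∘ B(□) ⊆ ≺` on `BL₂` and `≺` on `BL₁` is contained in `B(□) ∘ B(□)~`
(complements in the booleanizations are pseudocomplements). -/
theorem stmt19 {L₁ L₂ : Type*} [Order.Frame L₁] [Order.Frame L₂]
    (hc₁ : CompleteLattice.IsCompactElement (⊤ : L₁)) (hr₁ : IsRegularFrame L₁)
    (hc₂ : CompleteLattice.IsCompactElement (⊤ : L₂)) (hr₂ : IsRegularFrame L₂)
    (box : L₁ → L₂) (hbox : IsFrameHom box) :
    (∀ b b' : L₂, b ∈ Bool' L₂ → b' ∈ Bool' L₂ →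
      (∃ a ∈ Bool' L₁, wI b (box a) ∧ wI (pc b') (box (pc a))) → wI b b') ∧
    (∀ a a' : L₁, a ∈ Bool' L₁ → a' ∈ Bool' L₁ → wI a a' →
      ∃ b ∈ Bool' L₂, wI (pc b) (box (pc a)) ∧ wI b (box a')) :=
  stmt19_general hc₁ hr₁ box hbox
end
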